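/- For the unit disc D ⊂ ℝ², the rule L(f) = (π/2)f(0,0) + (π/8)(f(1,0)+f(0,1)+f(-1,0)+f(0,-1)) satisfies L(f) = ∫∫_D f dA for every polynomial f(x,y) of total degree ≤ 3. -/
import Mathlib

open MeasureTheory MvPolynomial Real Set

/-- The closed unit disc in the plane. -/
def Disc : Set (Fin 2 → ℝ) := {v | (v 0)^2 + (v 1)^2 ≤ 1}

lemma polar_target : polarCoord.target = Ioi (0:ℝ) ×ˢ Ioo (-π) π := rfl

lemma polar_symm (p : ℝ × ℝ) : polarCoord.symm p = (p.1 * cos p.2, p.1 * sin p.2) := rfl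

noncomputable def M (a b : ℕ) : ℝ := ∫ v in Disc, (v 0)^a * (v 1)^b

lemma M_eq (a b : ℕ) : M a b
    = (∫ r in (0:ℝ)..1, r^(a+b+1)) * (∫ θ in (-π)..π, cos θ ^ a * sin θ ^ b) := by
  have h1 : M a b = ∫ p in {q : ℝ × ℝ | q.1^2 + q.2^2 ≤ 1}, p.1^a * p.2^b := by
    rw [M, ← (volume_preserving_finTwoArrow ℝ).setIntegral_preimage_emb
      (MeasurableEquiv.finTwoArrow).measurableEmbedding]
    rfl
  have hDmeas : MeasurableSet {q : ℝ × ℝ | q.1^2 + q.2^2 ≤ 1} := by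
    apply measurableSet_le (by fun_prop) measurable_const
  have h2 : (∫ p in {q : ℝ × ℝ | q.1^2 + q.2^2 ≤ 1}, p.1^a * p.2^b)
      = ∫ p : ℝ × ℝ, ({q : ℝ × ℝ | q.1^2 + q.2^2 ≤ 1}).indicator (fun q => q.1^a * q.2^b) p := by
    rw [integral_indicator hDmeas]
  rw [h1, h2, ← integral_comp_polarCoord_symm]
  have h3 : ∀ p : ℝ × ℝ, p.1 • ({q : ℝ × ℝ | q.1^2 + q.2^2 ≤ 1}).indicator
        (fun q => q.1^a * q.2^b) (polarCoord.symm p)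
      = (polarCoord.symm ⁻¹' {q : ℝ × ℝ | q.1^2 + q.2^2 ≤ 1}).indicator
        (fun p : ℝ × ℝ => p.1 * ((polarCoord.symm p).1^a * (polarCoord.symm p).2^b)) p := by
    intro p
    by_cases h : polarCoord.symm p ∈ {q : ℝ × ℝ | q.1^2 + q.2^2 ≤ 1}
    · rw [indicator_of_mem h, indicator_of_mem (mem_preimage.mpr h), smul_eq_mul]
    · rw [indicator_of_notMem h, indicator_of_notMem (fun hc => h (mem_preimage.mp hc)),
        smul_zero]
  simp_rw [h3]
  have hAmeas : MeasurableSet (polarCoord.symm ⁻¹' {q : ℝ × ℝ | q.1^2 + q.2^2 ≤ 1}) := by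
    have : (polarCoord.symm ⁻¹' {q : ℝ × ℝ | q.1^2 + q.2^2 ≤ 1})
        = {p : ℝ × ℝ | (p.1 * cos p.2)^2 + (p.1 * sin p.2)^2 ≤ 1} := rfl
    rw [this]
    apply measurableSet_le (by fun_prop) measurable_const
  rw [setIntegral_indicator hAmeas]
  have hset : polarCoord.target ∩ polarCoord.symm ⁻¹' {q : ℝ × ℝ | q.1^2 + q.2^2 ≤ 1}
      = Ioc (0:ℝ) 1 ×ˢ Ioo (-π) π := by
    ext p
    simp only [polar_target, mem_inter_iff, mem_prod, mem_Ioi, mem_Ioo, mem_preimage,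
      polar_symm, mem_setOf_eq, mem_Ioc]
    have key : (p.1 * cos p.2)^2 + (p.1 * sin p.2)^2 = p.1^2 := by
      have hs := sin_sq_add_cos_sq p.2
      nlinarith [hs]
    rw [key]
    constructor
    · rintro ⟨⟨h1, h2⟩, h3⟩
      exact ⟨⟨h1, by nlinarith⟩, h2⟩
    · rintro ⟨⟨h1, h2⟩, h3⟩
      exact ⟨⟨h1, h3⟩, by nlinarith⟩
  rw [hset]
  have hcong : ∫ p in Ioc (0:ℝ) 1 ×ˢ Ioo (-π) π,
        p.1 * ((polarCoord.symm p).1^a * (polarCoord.symm p).2^b)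
      = ∫ p in Ioc (0:ℝ) 1 ×ˢ Ioo (-π) π, p.1^(a+b+1) * (cos p.2 ^ a * sin p.2 ^ b) := by
    apply setIntegral_congr_fun (measurableSet_Ioc.prod measurableSet_Ioo)
    intro p _
    simp only [polar_symm]
    ring
  rw [hcong, Measure.volume_eq_prod,
    setIntegral_prod_mul (fun r : ℝ => r^(a+b+1)) (fun θ : ℝ => cos θ ^ a * sin θ ^ b)]
  rw [intervalIntegral.integral_of_le (by norm_num : (0:ℝ) ≤ 1),
    intervalIntegral.integral_of_le (by linarith [pi_pos] : -π ≤ π),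
    integral_Ioc_eq_integral_Ioo, integral_Ioc_eq_integral_Ioo]

lemma M00 : M 0 0 = π := by rw [M_eq]; norm_num; ring
lemma M10 : M 1 0 = 0 := by rw [M_eq]; norm_num
lemma M01 : M 0 1 = 0 := by rw [M_eq]; norm_num
lemma M20 : M 2 0 = π/4 := by
  rw [M_eq]; norm_num [integral_cos_sq, integral_pow]; ring
lemma M11 : M 1 1 = 0 := by
  rw [M_eq]
  simp_rw [pow_one, mul_comm (cos _) (sin _)]
  rw [integral_sin_mul_cos₁]; norm_num
lemma M02 : M 0 2 = π/4 := by
  rw [M_eq]; norm_num [integral_sin_sq, integral_pow]; ring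
lemma M30 : M 3 0 = 0 := by rw [M_eq]; norm_num [integral_cos_pow]
lemma M21 : M 2 1 = 0 := by
  rw [M_eq]
  simp_rw [pow_one, mul_comm (cos _ ^ 2) (sin _)]
  rw [integral_sin_mul_cos_sq]; norm_num
lemma M12 : M 1 2 = 0 := by
  rw [M_eq]
  simp_rw [pow_one, mul_comm (cos _) (sin _ ^ 2)]
  rw [integral_sin_sq_mul_cos]; norm_num
lemma M03 : M 0 3 = 0 := by rw [M_eq]; norm_num [integral_sin_pow]

lemma quad_mono (a b : ℕ) (hab : a + b ≤ 3) :
    (π/2) * ((0:ℝ)^a * (0:ℝ)^b)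
      + (π/8) * ((1:ℝ)^a * (0:ℝ)^b + (0:ℝ)^a * (1:ℝ)^b
          + (-1:ℝ)^a * (0:ℝ)^b + (0:ℝ)^a * (-1:ℝ)^b) = M a b := by
  have ha : a ≤ 3 := le_trans (Nat.le_add_right a b) hab
  interval_cases a <;> (have hb : b ≤ 3 := by omega) <;> interval_cases b <;>
    first
      | (rw [M00]; norm_num; ring)
      | (rw [M10]; norm_num)
      | (rw [M01]; norm_num)
      | (rw [M20]; norm_num; ring)
      | (rw [M11]; norm_num)
      | (rw [M02]; norm_num; ring)
      | (rw [M30]; norm_num)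
      | (rw [M21]; norm_num)
      | (rw [M12]; norm_num)
      | (rw [M03]; norm_num)
      | omega

lemma disc_compact : IsCompact Disc := by
  have hclosed : IsClosed Disc := isClosed_le (by fun_prop) continuous_const
  have hbdd : Disc ⊆ Metric.closedBall 0 1 := by
    intro v hv
    simp only [Metric.mem_closedBall, dist_zero_right]
    rw [pi_norm_le_iff_of_nonneg (by norm_num)]
    have h0 : (v 0)^2 + (v 1)^2 ≤ 1 := hv
    have b0 : |v 0| ≤ 1 := abs_le.mpr ⟨by nlinarith [sq_nonneg (v 1)], by nlinarith [sq_nonneg (v 1)]⟩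
    have b1 : |v 1| ≤ 1 := abs_le.mpr ⟨by nlinarith [sq_nonneg (v 0)], by nlinarith [sq_nonneg (v 0)]⟩
    intro i
    fin_cases i
    · simpa using b0
    · simpa using b1
  exact (Metric.isCompact_of_isClosed_isBounded hclosed
    ((Metric.isBounded_closedBall).subset hbdd))

lemma disc_meas : MeasurableSet Disc := by
  apply measurableSet_le (by fun_prop) measurable_const

theorem stmt_6 (p : MvPolynomial (Fin 2) ℝ) (hp : p.totalDegree ≤ 3) :
    (π/2) * eval ![0, 0] p
      + (π/8) * (eval ![1, 0] p + eval ![0, 1] p + eval ![-1, 0] p + eval ![0, -1] p)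
      = ∫ v in Disc, eval v p := by
  classical
  have hev : ∀ x : Fin 2 → ℝ, eval x p
      = ∑ d ∈ p.support, coeff d p * ((x 0)^(d 0) * (x 1)^(d 1)) := by
    intro x
    rw [eval_eq']
    exact Finset.sum_congr rfl fun d _ => by rw [Fin.prod_univ_two]
  simp only [hev, Matrix.cons_val_zero, Matrix.cons_val_one, Matrix.head_cons]
  have hint : ∀ d ∈ p.support, IntegrableOn
      (fun v : Fin 2 → ℝ => coeff d p * ((v 0)^(d 0) * (v 1)^(d 1))) Disc := by
    intro d _
    exact ((by fun_prop : Continuous (fun v : Fin 2 → ℝ => coeff d p * ((v 0)^(d 0) * (v 1)^(d 1)))).locallyIntegrable).integrableOn_isCompact disc_compact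
  rw [integral_finset_sum _ hint]
  have hM : ∀ d : Fin 2 →₀ ℕ, (∫ v in Disc, coeff d p * ((v 0)^(d 0) * (v 1)^(d 1)))
      = coeff d p * M (d 0) (d 1) := fun d => by
    rw [M]; exact integral_const_mul _ _
  simp_rw [hM]
  rw [Finset.mul_sum, ← Finset.sum_add_distrib, ← Finset.sum_add_distrib,
    ← Finset.sum_add_distrib, Finset.mul_sum, ← Finset.sum_add_distrib]
  apply Finset.sum_congr rfl
  intro d hd
  have hdeg : d 0 + d 1 ≤ 3 := by
    have h1 := MvPolynomial.le_totalDegree hd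
    have h2 : (d.sum fun _ e => e) = d 0 + d 1 := by
      rw [Finsupp.sum_fintype _ _ (fun _ => rfl), Fin.sum_univ_two]
    omega
  rw [← quad_mono (d 0) (d 1) hdeg]
  ring
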